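/- arXiv:1111.6473 — 2 statements merged into one kernel-verified Lean document; each statement's English description precedes it below -/
import Mathlib

section
/- Let V be a set, n ∈ ℕ, and φ : V → ℝⁿ a feature mapping with associated node kernel k(v,w) = ⟨φ(v), φ(w)⟩ (Euclidean inner product). Define the Kronecker product feature mapping Ψ : V × V → ℝ^(n×n) by Ψ(v,v')(i,j) = φ(v)(i)·φ(v')(j) and the reciprocal feature mapping Φ_R(v,v') = Ψ(v,v') − Ψ(v',v). Then for all v,v',w,w' ∈ V, the inner product ⟨Φ_R(v,v'), Φ_R(w,w')⟩ in ℝ^(n×n) equals 2·(k(v,w)·k(v',w') − k(v,w')·k(v',w)). -/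
open scoped RealInnerProductSpace

/-- For the Kronecker product feature mapping
`Ψ(v,v')(i,j) = φ(v)(i)·φ(v')(j)` and the reciprocal feature mapping
`Φ_R(v,v') = Ψ(v,v') − Ψ(v',v)`, the induced edge kernel is the reciprocal
Kronecker product pairwise kernel `2·(k(v,w)·k(v',w') − k(v,w')·k(v',w))`,
where `k(v,w) = ⟪φ(v), φ(w)⟫`. -/
theorem reciprocal_kronecker_feature_map_kernel
    {V : Type*} (n : ℕ) (φ : V → EuclideanSpace ℝ (Fin n))
    (k : V → V → ℝ) (hk : ∀ v w : V, k v w = ⟪φ v, φ w⟫)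
    (Ψ : V × V → EuclideanSpace ℝ (Fin n × Fin n))
    (hΨ : ∀ (v v' : V) (i j : Fin n), Ψ (v, v') (i, j) = φ v i * φ v' j)
    (ΦR : V × V → EuclideanSpace ℝ (Fin n × Fin n))
    (hΦR : ∀ v v' : V, ΦR (v, v') = Ψ (v, v') - Ψ (v', v)) :
    ∀ v v' w w' : V,
      ⟪ΦR (v, v'), ΦR (w, w')⟫ = 2 * (k v w * k v' w' - k v w' * k v' w) := by
  intro v v' w w'
  have expand : ∀ a b c d : V,
      ⟪Ψ (a, b), Ψ (c, d)⟫ = ⟪φ a, φ c⟫ * ⟪φ b, φ d⟫ := by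
    intro a b c d
    simp only [PiLp.inner_apply, RCLike.inner_apply, starRingEnd_apply, star_trivial]
    rw [show ∀ f g : Fin n → ℝ, (∑ i, f i) * (∑ j, g j) = ∑ i, ∑ j, f i * g j from
      fun f g => by rw [Finset.sum_mul_sum]]
    rw [Fintype.sum_prod_type]
    apply Finset.sum_congr rfl; intro i _
    apply Finset.sum_congr rfl; intro j _
    rw [hΨ a b i j, hΨ c d i j]
    ring
  have hsub : ⟪ΦR (v, v'), ΦR (w, w')⟫
      = ⟪Ψ (v, v'), Ψ (w, w')⟫ - ⟪Ψ (v, v'), Ψ (w', w)⟫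
        - ⟪Ψ (v', v), Ψ (w, w')⟫ + ⟪Ψ (v', v), Ψ (w', w)⟫ := by
    rw [hΦR, hΦR, inner_sub_left, inner_sub_right, inner_sub_right]
    ring
  rw [hsub, expand, expand, expand, expand, hk, hk, hk, hk]
  have comm : ∀ a b : V, (⟪φ a, φ b⟫ : ℝ) = ⟪φ b, φ a⟫ := fun a b => real_inner_comm _ _
  rw [comm v' w, comm v' w', comm v w, comm v w']
  ring
end

section
/- Let V be a set, n ∈ ℕ, and φ : V → ℝⁿ a feature mapping with associated node kernel k(v,w) = ⟨φ(v), φ(w)⟩. Define Ψ : V × V → ℝ^(n×n) by Ψ(v,v') = φ(v) ⊗ (φ(v) − φ(v')), i.e., Ψ(v,v')(i,j) = φ(v)(i)·(φ(v)(j) − φ(v')(j)), and Φ_S(v,v') = Ψ(v,v') + Ψ(v',v). Then Φ_S(v,v') = (φ(v) − φ(v')) ⊗ (φ(v) − φ(v')), and for all v,v',w,w' ∈ V the induced edge kernel equals the metric learning pairwise kernel: ⟨Φ_S(v,v'), Φ_S(w,w')⟩ = (k(v,w) + k(v',w') − k(v,w') − k(v',w))². -/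
open scoped RealInnerProductSpace

/-- For `Ψ(v,v') = φ(v) ⊗ (φ(v) − φ(v'))` and
`Φ_S(v,v') = Ψ(v,v') + Ψ(v',v)`, one has
`Φ_S(v,v') = (φ(v) − φ(v')) ⊗ (φ(v) − φ(v'))`, and the induced edge kernel is the
metric learning pairwise kernel `(k(v,w) + k(v',w') − k(v,w') − k(v',w))²`,
where `k(v,w) = ⟪φ(v), φ(w)⟫`. -/
theorem metric_learning_pairwise_kernel_feature_map
    {V : Type*} (n : ℕ) (φ : V → EuclideanSpace ℝ (Fin n))
    (k : V → V → ℝ) (hk : ∀ v w : V, k v w = ⟪φ v, φ w⟫)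
    (Ψ : V × V → EuclideanSpace ℝ (Fin n × Fin n))
    (hΨ : ∀ (v v' : V) (i j : Fin n), Ψ (v, v') (i, j) = φ v i * (φ v j - φ v' j))
    (ΦS : V × V → EuclideanSpace ℝ (Fin n × Fin n))
    (hΦS : ∀ v v' : V, ΦS (v, v') = Ψ (v, v') + Ψ (v', v)) :
    (∀ (v v' : V) (i j : Fin n),
      ΦS (v, v') (i, j) = (φ v i - φ v' i) * (φ v j - φ v' j)) ∧
    (∀ v v' w w' : V,
      ⟪ΦS (v, v'), ΦS (w, w')⟫ = (k v w + k v' w' - k v w' - k v' w) ^ 2) := by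
  have h1 : ∀ (v v' : V) (i j : Fin n),
      ΦS (v, v') (i, j) = (φ v i - φ v' i) * (φ v j - φ v' j) := by
    intro v v' i j
    rw [hΦS]
    have : (Ψ (v, v') + Ψ (v', v)) (i, j) = Ψ (v, v') (i, j) + Ψ (v', v) (i, j) := rfl
    rw [this, hΨ, hΨ]
    ring
  refine ⟨h1, ?_⟩
  intro v v' w w'
  have hinner : ⟪ΦS (v, v'), ΦS (w, w')⟫
      = ∑ p : Fin n × Fin n, ΦS (v, v') p * ΦS (w, w') p := by
    simp [PiLp.inner_apply, RCLike.inner_apply, mul_comm]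
  rw [hinner]
  have hsum : ∑ p : Fin n × Fin n, ΦS (v, v') p * ΦS (w, w') p
      = (∑ i, (φ v i - φ v' i) * (φ w i - φ w' i)) ^ 2 := by
    rw [sq, Finset.sum_mul_sum, Fintype.sum_prod_type]
    refine Finset.sum_congr rfl fun i _ => Finset.sum_congr rfl fun j _ => ?_
    rw [show (i, j) = ((i, j).1, (i, j).2) from rfl, h1, h1]
    ring
  rw [hsum, hk, hk, hk, hk]
  simp [PiLp.inner_apply, RCLike.inner_apply, ← Finset.sum_sub_distrib, ← Finset.sum_add_distrib]
  congr 1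
  refine Finset.sum_congr rfl fun i _ => ?_
  ring
end
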